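/- arXiv:1606.03803 — 5 statements merged into one kernel-verified Lean document; each statement's English description precedes it below -/
import Mathlib

section
/- Let χ²(n) denote a chi-squared random variable with n degrees of freedom. Then for any y > 0, P(χ²(n)/n - 1 > 2y/n + 2·sqrt(y/n)) ≤ exp(-y). -/
/-!
Chernoff's bound with the moment generating function `E exp (t Z²) = (1 - 2t)^(-1/2)` of the
square of a standard normal gives `P(χ²(n) ≥ ε) ≤ exp (-t ε) (1 - 2t)^(-n/2)` for `0 ≤ t < 1/2`.
With `s = √(y/n)`, the threshold of the event is `ε = n (1 + 2s + 2s²)`, and the choice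
`t = s / (1 + 2s)` makes the exponent at most `-n s² = -y`, thanks to
`log u ≤ sinh (log u) = (u - u⁻¹) / 2` at `u = 1 + 2s`.
-/

open MeasureTheory ProbabilityTheory Real

lemma gaussianPDFReal_zero_one_mul_exp_mul_sq (t x : ℝ) :
    gaussianPDFReal 0 1 x * exp (t * x ^ 2) = (√(2 * π))⁻¹ * exp (-(1 / 2 - t) * x ^ 2) := by
  rw [gaussianPDFReal, NNReal.coe_one, mul_one, mul_one, sub_zero, mul_assoc, ← exp_add]
  ring_nf

/-- For `t ≥ 1 / 2` both sides are junk zeros: `x ↦ exp (t x²)` is not integrable and the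
square root of a nonpositive number is `0`. -/
lemma mgf_sq_gaussianReal (t : ℝ) :
    mgf (fun x ↦ x ^ 2) (gaussianReal 0 1) t = (√(1 - 2 * t))⁻¹ := by
  have h2π : π / (1 / 2 - t) = 2 * π * (1 - 2 * t)⁻¹ := by
    field_simp
  rw [mgf, integral_gaussianReal_eq_integral_smul one_ne_zero]
  simp only [smul_eq_mul, gaussianPDFReal_zero_one_mul_exp_mul_sq]
  rw [integral_const_mul, integral_gaussian, h2π,
    sqrt_mul (by positivity : (0 : ℝ) ≤ 2 * π) (1 - 2 * t)⁻¹, sqrt_inv,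
    inv_mul_cancel_left₀ (by positivity)]

lemma mgf_sq_of_map_eq_gaussianReal {Ω : Type*} [MeasurableSpace Ω] {μ : Measure Ω}
    {X : Ω → ℝ} (hX : Measurable X) (hgauss : μ.map X = gaussianReal 0 1) (t : ℝ) :
    mgf (fun ω ↦ X ω ^ 2) μ t = (√(1 - 2 * t))⁻¹ := by
  rw [← mgf_sq_gaussianReal, ← hgauss, mgf_map hX.aemeasurable (by fun_prop)]
  rfl

lemma Real.log_le_half_sub_inv {u : ℝ} (hu : 1 ≤ u) : log u ≤ (u - u⁻¹) / 2 :=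
  sinh_log (by linarith) ▸ self_le_sinh_iff.mpr (log_nonneg hu)

lemma exp_mul_inv_sqrt_pow_le {s : ℝ} (hs : 0 ≤ s) (m : ℕ) :
    exp (-(s / (1 + 2 * s)) * (m * (1 + 2 * s + 2 * s ^ 2))) *
      (√(1 - 2 * (s / (1 + 2 * s))))⁻¹ ^ m ≤ exp (-(m * s ^ 2)) := by
  have hu : 0 < 1 + 2 * s := by linarith
  have hsqrt : (√(1 - 2 * (s / (1 + 2 * s))))⁻¹ = exp (log (1 + 2 * s) / 2) := by
    rw [show 1 - 2 * (s / (1 + 2 * s)) = (1 + 2 * s)⁻¹ by field_simp; ring, sqrt_inv, inv_inv,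
      ← log_sqrt hu.le, exp_log (sqrt_pos.mpr hu)]
  have hlog : log (1 + 2 * s) ≤ 2 * (s + s ^ 2) / (1 + 2 * s) := by
    refine (log_le_half_sub_inv (by linarith)).trans_eq ?_
    field_simp
    ring
  rw [hsqrt, ← exp_nat_mul, ← exp_add, exp_le_exp]
  have key : -(s / (1 + 2 * s)) * (m * (1 + 2 * s + 2 * s ^ 2))
      + m * (2 * (s + s ^ 2) / (1 + 2 * s) / 2) = -(m * s ^ 2) := by
    field_simp
    ring
  rw [← key]
  gcongr

section SumOfSquares

variable {Ω ι : Type*} [MeasurableSpace Ω] {μ : Measure Ω} [IsProbabilityMeasure μ] [Fintype ι]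
  {Z : ι → Ω → ℝ}

lemma measureReal_sum_sq_ge_le_exp_mul (hmeas : ∀ i, Measurable (Z i)) (hindep : iIndepFun Z μ)
    (hgauss : ∀ i, μ.map (Z i) = gaussianReal 0 1) (ε : ℝ) {t : ℝ} (ht₀ : 0 ≤ t) (ht : t < 1 / 2) :
    μ.real {ω | ε ≤ ∑ i, Z i ω ^ 2} ≤ exp (-t * ε) * (√(1 - 2 * t))⁻¹ ^ Fintype.card ι := by
  have hsq_meas : ∀ i, Measurable (fun ω ↦ Z i ω ^ 2) := fun i ↦ (hmeas i).pow_const 2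
  have hsq_indep : iIndepFun (fun i ω ↦ Z i ω ^ 2) μ :=
    hindep.comp (fun _ x ↦ x ^ 2) (fun _ ↦ measurable_id.pow_const 2)
  have hmgf : ∀ i, mgf (fun ω ↦ Z i ω ^ 2) μ t = (√(1 - 2 * t))⁻¹ :=
    fun i ↦ mgf_sq_of_map_eq_gaussianReal (hmeas i) (hgauss i) t
  have hint : ∀ i ∈ Finset.univ, Integrable (fun ω ↦ exp (t * Z i ω ^ 2)) μ := fun i _ ↦ by
    rw [← mgf_pos_iff, hmgf]
    exact inv_pos.mpr (sqrt_pos.mpr (by linarith))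
  have hsum : (∑ i, fun ω ↦ Z i ω ^ 2) = fun ω ↦ ∑ i, Z i ω ^ 2 := by
    ext ω; simp
  have h := measure_ge_le_exp_mul_mgf ε ht₀ (hsq_indep.integrable_exp_mul_sum hsq_meas hint)
  rwa [hsq_indep.mgf_sum hsq_meas, Finset.prod_congr rfl (fun i _ ↦ hmgf i), Finset.prod_const,
    Finset.card_univ, hsum] at h

lemma measure_sum_sq_ge_le_exp (hmeas : ∀ i, Measurable (Z i)) (hindep : iIndepFun Z μ)
    (hgauss : ∀ i, μ.map (Z i) = gaussianReal 0 1) {s : ℝ} (hs : 0 ≤ s) :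
    μ {ω | Fintype.card ι * (1 + 2 * s + 2 * s ^ 2) ≤ ∑ i, Z i ω ^ 2}
      ≤ ENNReal.ofReal (exp (-(Fintype.card ι * s ^ 2))) := by
  have ht : s / (1 + 2 * s) < 1 / 2 := by
    rw [div_lt_iff₀ (by linarith)]
    linarith
  rw [← ofReal_measureReal]
  exact ENNReal.ofReal_le_ofReal <|
    (measureReal_sum_sq_ge_le_exp_mul hmeas hindep hgauss _ (by positivity) ht).trans
      (exp_mul_inv_sqrt_pow_le hs _)

end SumOfSquares

/-- Chi-squared tail bound: if `χ²(n)` is the sum of squares of `n` i.i.d. standard normals,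
then for any `y > 0`, `P(χ²(n)/n - 1 > 2y/n + 2√(y/n)) ≤ exp (-y)`. -/
theorem stmt_4 {n : ℕ} {Ωs : Type*} [MeasurableSpace Ωs] (μ : Measure Ωs)
    [IsProbabilityMeasure μ]
    (Z : Fin n → Ωs → ℝ) (hmeas : ∀ i, Measurable (Z i))
    (hindep : iIndepFun Z μ)
    (hgauss : ∀ i, Measure.map (Z i) μ = gaussianReal 0 1)
    (y : ℝ) (hy : 0 < y) :
    μ {ω | (∑ i, Z i ω ^ 2) / n - 1 > 2 * y / n + 2 * Real.sqrt (y / n)}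
      ≤ ENNReal.ofReal (Real.exp (-y)) := by
  rcases Nat.eq_zero_or_pos n with rfl | hn
  · norm_num
  have hn' : (0 : ℝ) < n := by exact_mod_cast hn
  set s := √(y / n) with hs
  have hy_eq : y = n * s ^ 2 := by
    rw [hs, sq_sqrt (by positivity)]
    field_simp
  have hsub : {ω | (∑ i, Z i ω ^ 2) / n - 1 > 2 * y / n + 2 * s}
      ⊆ {ω | Fintype.card (Fin n) * (1 + 2 * s + 2 * s ^ 2) ≤ ∑ i, Z i ω ^ 2} := by
    intro ω hω
    have h := (lt_div_iff₀ hn').mp (lt_sub_iff_add_lt.mp hω)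
    have hlhs : (2 * y / n + 2 * s + 1) * n = n * (1 + 2 * s + 2 * s ^ 2) := by
      rw [hy_eq]
      field_simp
      ring
    rw [Fintype.card_fin]
    exact (hlhs ▸ h).le
  calc _ ≤ _ := measure_mono hsub
    _ ≤ _ := measure_sum_sq_ge_le_exp hmeas hindep hgauss (sqrt_nonneg _)
    _ = _ := by rw [Fintype.card_fin, ← hy_eq]
end

section
/- Let χ²(n) denote a chi-squared random variable with n degrees of freedom. Then for any x > 0, P(|χ²(n)/n - 1| > x) ≤ 2·exp(-n·x·min(x,1)/8). -/
/-!
Chernoff's method. A square of a standard normal has moment generating function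
`(1 - 2t)^(-1/2)`, so by independence `E exp (t χ²(n)) = (1 - 2t)^(-n/2)` for `t < 1/2`.
Optimising the Chernoff bound over `t` gives, for `y > -1`, the bound
`exp (n (log (1 + y) - y) / 2)` on `P(χ²(n) ≥ n(1 + y))` when `y ≥ 0` and on
`P(χ²(n) ≤ n(1 + y))` when `y ≤ 0`. The elementary inequalities
`log (1 + x) - x ≤ -x min(x, 1) / 4` and `log (1 - x) + x ≤ -x² / 4` turn both exponents into
`-n x min(x, 1) / 8`, and a union bound over the two tails gives the factor `2`.
-/

open MeasureTheory ProbabilityTheory Real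

namespace Real

lemma log_one_add_sub_le {x : ℝ} (hx : 0 ≤ x) : log (1 + x) - x ≤ -(x * min x 1) / 4 := by
  have hu : 0 ≤ x - x * min x 1 / 4 := by
    nlinarith [min_le_left x 1, min_le_right x 1, le_min hx zero_le_one]
  have hquad : 1 + x ≤ 1 + (x - x * min x 1 / 4) + (x - x * min x 1 / 4) ^ 2 / 2 := by
    rcases le_total x 1 with h | h
    · rw [min_eq_left h]; nlinarith
    · rw [min_eq_right h]; nlinarith
  have := (log_le_iff_le_exp (by linarith)).2 (hquad.trans (quadratic_le_exp_of_nonneg hu))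
  linarith

lemma log_one_sub_add_le {x : ℝ} (hx₀ : 0 ≤ x) (hx₁ : x < 1) : log (1 - x) + x ≤ -x ^ 2 / 4 := by
  -- `log (1 - x) = 2 log s ≤ 2 (s - 1)` with `s = √(1 - x)`; the rest is polynomial in `s`
  set s := √(1 - x)
  have hs₀ : 0 < s := sqrt_pos.2 (by linarith)
  have hs₁ : s ≤ 1 := sqrt_le_one.2 (by linarith)
  have hs : s ^ 2 = 1 - x := sq_sqrt (by linarith)
  have hlog : log (1 - x) = 2 * log s := by rw [← hs, log_pow]; norm_num
  have := log_le_sub_one_of_pos hs₀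
  nlinarith [mul_nonneg (sub_nonneg.2 hs₁) (sub_nonneg.2 hs₁)]

-- `t = y / (2 (1 + y))` minimises the Chernoff bound `exp (-t N (1 + y)) (1 - 2t) ^ (-N/2)`
lemma exp_neg_mul_inv_sqrt_pow_eq {y : ℝ} (hy : -1 < y) (N : ℕ) :
    exp (-(y / (2 * (1 + y))) * (N * (1 + y))) * (√(1 - 2 * (y / (2 * (1 + y)))))⁻¹ ^ N
      = exp (N * (log (1 + y) - y) / 2) := by
  have hy' : 0 < 1 + y := by linarith
  have h1 : 1 - 2 * (y / (2 * (1 + y))) = (1 + y)⁻¹ := by field_simp; ring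
  have h2 : √(1 + y) = exp (log (1 + y) / 2) := by
    rw [← exp_log (sqrt_pos.2 hy'), log_sqrt hy'.le]
  rw [h1, sqrt_inv, inv_inv, h2, ← exp_nat_mul, ← exp_add]
  congr 1
  field_simp
  ring

end Real

lemma le_mul_one_add_or_lt_mul_one_sub {s N x : ℝ} (hs : 0 ≤ s) (hN : 0 ≤ N)
    (h : x < |s / N - 1|) : N * (1 + x) ≤ s ∨ s < N * (1 - x) := by
  rcases hN.eq_or_lt with rfl | hN
  · simp [hs]
  rcases lt_abs.1 h with h | h
  · left; rw [← le_div_iff₀' hN]; linarith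
  · right; rw [← div_lt_iff₀' hN]; linarith

namespace ProbabilityTheory

lemma gaussianPDFReal_zero_one_mul_exp_mul_sq (t x : ℝ) :
    gaussianPDFReal 0 1 x * exp (t * x ^ 2) = (√(2 * π))⁻¹ * exp (-(1 / 2 - t) * x ^ 2) := by
  simp only [gaussianPDFReal_def, NNReal.coe_one, mul_one, sub_zero]
  rw [mul_assoc, ← exp_add]
  congr 2
  ring

lemma integrable_exp_mul_sq_gaussianReal {t : ℝ} (ht : t < 1 / 2) :
    Integrable (fun x ↦ exp (t * x ^ 2)) (gaussianReal 0 1) := by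
  rw [gaussianReal_of_var_ne_zero _ one_ne_zero,
    integrable_withDensity_iff_integrable_smul' (measurable_gaussianPDF 0 1)
      (ae_of_all _ fun _ ↦ gaussianPDF_lt_top)]
  simp_rw [toReal_gaussianPDF, smul_eq_mul, gaussianPDFReal_zero_one_mul_exp_mul_sq]
  exact (integrable_exp_neg_mul_sq (by linarith)).const_mul _

-- For `t ≥ 1/2` both sides are junk `0`: the integral of a non-integrable function and `0⁻¹`.
lemma mgf_sq_gaussianReal (t : ℝ) :
    mgf (fun x ↦ x ^ 2) (gaussianReal 0 1) t = (√(1 - 2 * t))⁻¹ := by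
  rw [mgf, integral_gaussianReal_eq_integral_smul one_ne_zero]
  simp_rw [smul_eq_mul, gaussianPDFReal_zero_one_mul_exp_mul_sq]
  rw [integral_const_mul, integral_gaussian, ← sqrt_inv, ← sqrt_mul (by positivity), ← sqrt_inv]
  congr 1
  field_simp

variable {Ω ι : Type*} [MeasurableSpace Ω] {μ : Measure Ω} {t : ℝ}

lemma integrable_exp_mul_sq_of_map_eq_gaussianReal {X : Ω → ℝ} (hX : Measurable X)
    (hmap : μ.map X = gaussianReal 0 1) (ht : t < 1 / 2) :
    Integrable (fun ω ↦ exp (t * X ω ^ 2)) μ :=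
  (integrable_map_measure (g := fun x ↦ exp (t * x ^ 2)) (by fun_prop) hX.aemeasurable).1
    (hmap ▸ integrable_exp_mul_sq_gaussianReal ht)

lemma mgf_sq_of_map_eq_gaussianReal {X : Ω → ℝ} (hX : Measurable X)
    (hmap : μ.map X = gaussianReal 0 1) :
    mgf (fun ω ↦ X ω ^ 2) μ t = (√(1 - 2 * t))⁻¹ := by
  rw [← mgf_sq_gaussianReal, ← hmap, mgf_map hX.aemeasurable (by fun_prop)]
  rfl

namespace iIndepFun

variable [Fintype ι] {Z : ι → Ω → ℝ}

lemma mgf_sum_sq (hindep : iIndepFun Z μ) (hmeas : ∀ i, Measurable (Z i))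
    (hgauss : ∀ i, μ.map (Z i) = gaussianReal 0 1) :
    mgf (fun ω ↦ ∑ i, Z i ω ^ 2) μ t = (√(1 - 2 * t))⁻¹ ^ Fintype.card ι := by
  have := (hindep.comp (fun _ z ↦ z ^ 2) fun _ ↦ by fun_prop).mgf_sum
    (fun i ↦ (hmeas i).pow_const 2) Finset.univ (t := t)
  simp only [Function.comp_def] at this
  rw [show (fun ω ↦ ∑ i, Z i ω ^ 2) = ∑ i, fun ω ↦ Z i ω ^ 2 by ext; simp, this]
  simp [mgf_sq_of_map_eq_gaussianReal (hmeas _) (hgauss _)]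

variable [IsFiniteMeasure μ]

lemma integrable_exp_mul_sum_sq (hindep : iIndepFun Z μ) (hmeas : ∀ i, Measurable (Z i))
    (hgauss : ∀ i, μ.map (Z i) = gaussianReal 0 1) (ht : t < 1 / 2) :
    Integrable (fun ω ↦ exp (t * ∑ i, Z i ω ^ 2)) μ := by
  have := (hindep.comp (fun _ z ↦ z ^ 2) fun _ ↦ by fun_prop).integrable_exp_mul_sum
    (fun i ↦ (hmeas i).pow_const 2) (s := Finset.univ)
    fun i _ ↦ integrable_exp_mul_sq_of_map_eq_gaussianReal (hmeas i) (hgauss i) ht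
  simpa [Finset.sum_apply] using this

lemma measureReal_sum_sq_ge_le_exp_log (hindep : iIndepFun Z μ) (hmeas : ∀ i, Measurable (Z i))
    (hgauss : ∀ i, μ.map (Z i) = gaussianReal 0 1) {y : ℝ} (hy : 0 ≤ y) :
    μ.real {ω | Fintype.card ι * (1 + y) ≤ ∑ i, Z i ω ^ 2}
      ≤ exp (Fintype.card ι * (log (1 + y) - y) / 2) := by
  have ht : y / (2 * (1 + y)) < 1 / 2 := by rw [div_lt_iff₀ (by positivity)]; linarith
  have := measure_ge_le_exp_mul_mgf (X := fun ω ↦ ∑ i, Z i ω ^ 2) (Fintype.card ι * (1 + y))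
    (by positivity) (hindep.integrable_exp_mul_sum_sq hmeas hgauss ht)
  rwa [hindep.mgf_sum_sq hmeas hgauss, exp_neg_mul_inv_sqrt_pow_eq (by linarith)] at this

lemma measureReal_sum_sq_le_le_exp_log (hindep : iIndepFun Z μ) (hmeas : ∀ i, Measurable (Z i))
    (hgauss : ∀ i, μ.map (Z i) = gaussianReal 0 1) {y : ℝ} (hy₁ : -1 < y) (hy₀ : y ≤ 0) :
    μ.real {ω | ∑ i, Z i ω ^ 2 ≤ Fintype.card ι * (1 + y)}
      ≤ exp (Fintype.card ι * (log (1 + y) - y) / 2) := by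
  have hy' : 0 < 1 + y := by linarith
  have ht : y / (2 * (1 + y)) < 1 / 2 := by rw [div_lt_iff₀ (by positivity)]; linarith
  have := measure_le_le_exp_mul_mgf (X := fun ω ↦ ∑ i, Z i ω ^ 2) (Fintype.card ι * (1 + y))
    (t := y / (2 * (1 + y))) (div_nonpos_of_nonpos_of_nonneg hy₀ (by positivity))
    (hindep.integrable_exp_mul_sum_sq hmeas hgauss ht)
  rwa [hindep.mgf_sum_sq hmeas hgauss, exp_neg_mul_inv_sqrt_pow_eq hy₁] at this

lemma measureReal_sum_sq_ge_le_exp (hindep : iIndepFun Z μ) (hmeas : ∀ i, Measurable (Z i))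
    (hgauss : ∀ i, μ.map (Z i) = gaussianReal 0 1) {x : ℝ} (hx : 0 ≤ x) :
    μ.real {ω | Fintype.card ι * (1 + x) ≤ ∑ i, Z i ω ^ 2}
      ≤ exp (-Fintype.card ι * x * min x 1 / 8) := by
  refine (hindep.measureReal_sum_sq_ge_le_exp_log hmeas hgauss hx).trans (exp_le_exp.2 ?_)
  nlinarith [log_one_add_sub_le hx, (Fintype.card ι).cast_nonneg' (α := ℝ)]

lemma measureReal_sum_sq_lt_le_exp (hindep : iIndepFun Z μ) (hmeas : ∀ i, Measurable (Z i))
    (hgauss : ∀ i, μ.map (Z i) = gaussianReal 0 1) {x : ℝ} (hx : 0 ≤ x) :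
    μ.real {ω | ∑ i, Z i ω ^ 2 < Fintype.card ι * (1 - x)}
      ≤ exp (-Fintype.card ι * x * min x 1 / 8) := by
  rcases le_or_gt 1 x with hx₁ | hx₁
  · have : {ω | ∑ i, Z i ω ^ 2 < Fintype.card ι * (1 - x)} = ∅ :=
      Set.eq_empty_of_forall_notMem fun ω (hω : ∑ i, Z i ω ^ 2 < Fintype.card ι * (1 - x)) ↦ by
        nlinarith [Finset.sum_nonneg fun i (_ : i ∈ Finset.univ) ↦ sq_nonneg (Z i ω),
          (Fintype.card ι).cast_nonneg' (α := ℝ)]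
    simp [this, exp_nonneg]
  have := hindep.measureReal_sum_sq_le_le_exp_log hmeas hgauss (y := -x) (by linarith)
    (by linarith)
  rw [← sub_eq_add_neg, sub_neg_eq_add] at this
  calc μ.real {ω | ∑ i, Z i ω ^ 2 < Fintype.card ι * (1 - x)}
      ≤ μ.real {ω | ∑ i, Z i ω ^ 2 ≤ Fintype.card ι * (1 - x)} :=
        measureReal_mono (Set.ofPred_subset_ofPred.2 fun _ ↦ le_of_lt)
    _ ≤ exp (Fintype.card ι * (log (1 - x) + x) / 2) := this
    _ ≤ exp (-Fintype.card ι * x * min x 1 / 8) := by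
        rw [exp_le_exp, min_eq_left hx₁.le]
        nlinarith [log_one_sub_add_le hx hx₁, (Fintype.card ι).cast_nonneg' (α := ℝ)]

end iIndepFun

end ProbabilityTheory

/-- Chi-squared tail bound: if `χ²(n)` is the sum of squares of `n` i.i.d. standard normals,
then for any `x > 0`, `P(|χ²(n)/n - 1| > x) ≤ 2 exp (-n x min(x,1) / 8)`. -/
theorem stmt_6 {n : ℕ} {Ωs : Type*} [MeasurableSpace Ωs] (μ : Measure Ωs)
    [IsProbabilityMeasure μ]
    (Z : Fin n → Ωs → ℝ) (hmeas : ∀ i, Measurable (Z i))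
    (hindep : iIndepFun Z μ)
    (hgauss : ∀ i, Measure.map (Z i) μ = gaussianReal 0 1)
    (x : ℝ) (hx : 0 < x) :
    μ {ω | |(∑ i, Z i ω ^ 2) / n - 1| > x}
      ≤ ENNReal.ofReal (2 * Real.exp (-(n : ℝ) * x * min x 1 / 8)) := by
  have upper := hindep.measureReal_sum_sq_ge_le_exp hmeas hgauss hx.le
  have lower := hindep.measureReal_sum_sq_lt_le_exp hmeas hgauss hx.le
  rw [Fintype.card_fin] at upper lower
  have hcover : {ω | |(∑ i, Z i ω ^ 2) / n - 1| > x}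
      ⊆ {ω | n * (1 + x) ≤ ∑ i, Z i ω ^ 2} ∪ {ω | ∑ i, Z i ω ^ 2 < n * (1 - x)} := fun ω hω ↦
    le_mul_one_add_or_lt_mul_one_sub (Finset.sum_nonneg fun i _ ↦ sq_nonneg (Z i ω))
      n.cast_nonneg hω
  rw [← ofReal_measureReal]
  refine ENNReal.ofReal_le_ofReal ?_
  calc μ.real {ω | |(∑ i, Z i ω ^ 2) / n - 1| > x}
      ≤ μ.real ({ω | n * (1 + x) ≤ ∑ i, Z i ω ^ 2} ∪ {ω | ∑ i, Z i ω ^ 2 < n * (1 - x)}) :=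
        measureReal_mono hcover
    _ ≤ _ := measureReal_union_le _ _
    _ ≤ _ := by linarith
end

section
/- Let g_0, g_1, g_2 be the densities of p-dimensional centered Gaussian distributions N(0, Σ_0), N(0, Σ_1), N(0, Σ_2) with Σ_0, Σ_1, Σ_2 positive definite, and suppose the matrix I - Σ_0^{-1}(Σ_1 - Σ_0)Σ_0^{-1}(Σ_2 - Σ_0) is positive definite. Then ∫ g_1(x) g_2(x) / g_0(x) dx = [det(I - Σ_0^{-1}(Σ_1 - Σ_0)Σ_0^{-1}(Σ_2 - Σ_0))]^{-1/2}. -/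
/-!
The ratio `g₁ g₂ / g₀` is a constant times the Gaussian kernel `exp (-xᵀ A x / 2)` with
`A = S₁⁻¹ + S₂⁻¹ - S₀⁻¹`, and the identity `M = S₀⁻¹ S₁ A S₂` for
`M = I - S₀⁻¹ (S₁ - S₀) S₀⁻¹ (S₂ - S₀)` turns the Gaussian integral `(2π)^{p/2} det(A)^{-1/2}`
into `det(M)^{-1/2}`. The real content is that `A` is positive definite. Deform `Sᵢ` to
`(1 - s) S₀ + s Sᵢ`: the corresponding `M` becomes `(1 - s²) I + s² M`, which stays positive
definite, so `A` stays nonsingular along the deformation. It is positive definite at `s = 0`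
(where it equals `S₀⁻¹`), and a continuous family of nonsingular symmetric matrices cannot lose
positive definiteness.
-/

open MeasureTheory Real Matrix

theorem Continuous.matrix_inv {n X K : Type*} [Fintype n] [DecidableEq n] [TopologicalSpace X]
    [Field K] [TopologicalSpace K] [IsTopologicalDivisionRing K] {F : X → Matrix n n K}
    (hF : Continuous F) (hdet : ∀ x, (F x).det ≠ 0) : Continuous fun x => (F x)⁻¹ :=
  continuous_iff_continuousAt.2 fun x => (continuousAt_matrix_inv _
    (by rw [Ring.inverse_eq_inv']; exact continuousAt_inv₀ (hdet x))).comp hF.continuousAt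

namespace Matrix

variable {n : Type*}

theorem PosDef.one_sub_smul_add_smul {A B : Matrix n n ℝ} (hA : A.PosDef) (hB : B.PosDef)
    {s : ℝ} (hs₀ : 0 ≤ s) (hs₁ : s ≤ 1) : ((1 - s) • A + s • B).PosDef := by
  rcases hs₀.eq_or_lt with rfl | hs₀
  · simpa using hA
  · exact (hB.smul hs₀).posSemidef_add (hA.posSemidef.smul (sub_nonneg.2 hs₁))

variable [Fintype n]

theorem isClosed_setOf_posSemidef : IsClosed {A : Matrix n n ℝ | A.PosSemidef} := by
  simp only [posSemidef_iff_dotProduct_mulVec, Set.ofPred_and, Set.ofPred_forall]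
  refine (isClosed_eq (continuous_id (X := Matrix n n ℝ)).matrix_conjTranspose continuous_id).inter
    (isClosed_iInter fun v => isClosed_le continuous_const ?_)
  fun_prop

theorem PosDef.eventually_posDef {A : Matrix n n ℝ} (hA : A.PosDef) :
    ∀ᶠ B in nhds A, B.IsHermitian → B.PosDef := by
  have hsphere : ∀ᶠ B in nhds A, ∀ v ∈ Metric.sphere (0 : n → ℝ) 1, 0 < v ⬝ᵥ B *ᵥ v :=
    (isCompact_sphere 0 1).eventually_forall_of_forall_eventually fun v hv =>
      (show Continuous fun q : Matrix n n ℝ × (n → ℝ) => q.2 ⬝ᵥ q.1 *ᵥ q.2 by fun_prop)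
        |>.continuousAt.eventually
          (lt_mem_nhds (by simpa using hA.dotProduct_mulVec_pos (by rintro rfl; simp at hv)))
  filter_upwards [hsphere] with B hB hBh
  refine .of_dotProduct_mulVec_pos hBh fun v hv => ?_
  have hunit := hB (‖v‖⁻¹ • v) (by simp [norm_smul, hv])
  simp only [mulVec_smul, dotProduct_smul, smul_dotProduct, smul_eq_mul] at hunit
  exact pos_of_mul_pos_right (pos_of_mul_pos_right hunit (by positivity)) (by positivity)

variable [DecidableEq n]

theorem PosDef.of_continuous_of_det_ne_zero {X : Type*} [TopologicalSpace X] [PreconnectedSpace X]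
    {F : X → Matrix n n ℝ} (hF : Continuous F) (hherm : ∀ x, (F x).IsHermitian)
    (hdet : ∀ x, (F x).det ≠ 0) {x₀ : X} (h₀ : (F x₀).PosDef) (x : X) : (F x).PosDef := by
  have hclosed : {x | (F x).PosDef} = F ⁻¹' {A | A.PosSemidef} := by
    ext x
    exact ⟨PosDef.posSemidef, fun h => h.posDef_iff_det_ne_zero.2 (hdet x)⟩
  have hopen : IsOpen {x | (F x).PosDef} := isOpen_iff_mem_nhds.2 fun x hx =>
    (hF.continuousAt.eventually hx.eventually_posDef).mono fun y hy => hy (hherm y)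
  have hclopen : IsClopen {x | (F x).PosDef} :=
    ⟨hclosed ▸ isClosed_setOf_posSemidef.preimage hF, hopen⟩
  exact Set.eq_univ_iff_forall.1 (hclopen.eq_univ ⟨x₀, h₀⟩) x

theorem one_sub_inv_mul_sub_mul_inv_mul_sub {R : Type*} [CommRing R] {X Y Z : Matrix n n R}
    (hX : IsUnit X.det) (hY : IsUnit Y.det) (hZ : IsUnit Z.det) :
    1 - Z⁻¹ * (X - Z) * Z⁻¹ * (Y - Z) = Z⁻¹ * X * (X⁻¹ + Y⁻¹ - Z⁻¹) * Y := by
  simp only [mul_sub, sub_mul, mul_add, add_mul, Matrix.mul_assoc,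
    mul_nonsing_inv_cancel_left _ _ hX, nonsing_inv_mul _ hY, nonsing_inv_mul _ hZ,
    Matrix.mul_one, Matrix.one_mul]
  abel

theorem det_inv_add_inv_sub_inv_ne_zero {R : Type*} [CommRing R] {X Y Z : Matrix n n R}
    (hX : IsUnit X.det) (hY : IsUnit Y.det) (hZ : IsUnit Z.det)
    (hM : (1 - Z⁻¹ * (X - Z) * Z⁻¹ * (Y - Z)).det ≠ 0) : (X⁻¹ + Y⁻¹ - Z⁻¹).det ≠ 0 := by
  rw [one_sub_inv_mul_sub_mul_inv_mul_sub hX hY hZ, det_mul, det_mul, det_mul] at hM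
  exact right_ne_zero_of_mul (left_ne_zero_of_mul hM)

theorem posDef_inv_add_inv_sub_inv {S₀ S₁ S₂ : Matrix n n ℝ} (h₀ : S₀.PosDef)
    (h₁ : S₁.PosDef) (h₂ : S₂.PosDef) (hM : (1 - S₀⁻¹ * (S₁ - S₀) * S₀⁻¹ * (S₂ - S₀)).PosDef) :
    (S₁⁻¹ + S₂⁻¹ - S₀⁻¹).PosDef := by
  set T : Matrix n n ℝ → unitInterval → Matrix n n ℝ :=
    fun S s => (1 - (s : ℝ)) • S₀ + (s : ℝ) • S
  have hT : ∀ S, S.PosDef → ∀ s, (T S s).PosDef := fun S hS s =>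
    h₀.one_sub_smul_add_smul hS s.2.1 s.2.2
  have hT_sub : ∀ S s, T S s - S₀ = (s : ℝ) • (S - S₀) := fun S s => by
    simp only [T, sub_smul, one_smul, smul_sub]
    abel
  have hM_path : ∀ s : unitInterval,
      (1 - S₀⁻¹ * (T S₁ s - S₀) * S₀⁻¹ * (T S₂ s - S₀)).PosDef := fun s => by
    have hM_eq : 1 - S₀⁻¹ * (T S₁ s - S₀) * S₀⁻¹ * (T S₂ s - S₀)
        = (1 - (s : ℝ) ^ 2) • 1 + (s : ℝ) ^ 2 • (1 - S₀⁻¹ * (S₁ - S₀) * S₀⁻¹ * (S₂ - S₀)) := by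
      rw [hT_sub, hT_sub]
      simp only [mul_smul_comm, smul_mul_assoc, smul_smul, ← sq]
      rw [smul_sub, sub_smul, one_smul]
      abel
    rw [hM_eq]
    exact PosDef.one.one_sub_smul_add_smul hM (sq_nonneg _) (pow_le_one₀ s.2.1 s.2.2)
  set F : unitInterval → Matrix n n ℝ := fun s => (T S₁ s)⁻¹ + (T S₂ s)⁻¹ - S₀⁻¹
  have hF_det : ∀ s, (F s).det ≠ 0 := fun s =>
    det_inv_add_inv_sub_inv_ne_zero (hT S₁ h₁ s).det_pos.ne'.isUnit (hT S₂ h₂ s).det_pos.ne'.isUnit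
      h₀.det_pos.ne'.isUnit (hM_path s).det_pos.ne'
  have hF_cont : Continuous F := by
    have hT_cont : ∀ S, Continuous (T S) := fun S => by fun_prop
    exact ((hT_cont S₁).matrix_inv fun s => (hT S₁ h₁ s).det_pos.ne').add
      ((hT_cont S₂).matrix_inv fun s => (hT S₂ h₂ s).det_pos.ne') |>.sub continuous_const
  have hF_herm : ∀ s, (F s).IsHermitian := fun s =>
    ((hT S₁ h₁ s).inv.isHermitian.add (hT S₂ h₂ s).inv.isHermitian).sub h₀.inv.isHermitian
  have hF_zero : (F 0).PosDef := by simpa [F, T] using h₀.inv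
  simpa [F, T] using PosDef.of_continuous_of_det_ne_zero hF_cont hF_herm hF_det hF_zero 1

end Matrix

section Gaussian

variable {ι : Type*} [Fintype ι]

theorem integral_exp_neg_dotProduct_self_div_two :
    ∫ y : ι → ℝ, exp (-(y ⬝ᵥ y) / 2) = sqrt (2 * π) ^ Fintype.card ι := by
  have hprod : ∀ y : ι → ℝ, exp (-(y ⬝ᵥ y) / 2) = ∏ i, exp (-(1 / 2) * y i ^ 2) := fun y => by
    rw [← exp_sum, dotProduct, ← Finset.sum_neg_distrib, Finset.sum_div]
    exact congrArg exp (Finset.sum_congr rfl fun i _ => by ring)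
  simp_rw [hprod]
  rw [volume_pi, integral_fintype_prod_eq_pow (fun t : ℝ => exp (-(1 / 2) * t ^ 2)),
    integral_gaussian]
  norm_num [div_div_eq_mul_div, mul_comm]

variable [DecidableEq ι]

theorem integral_exp_neg_dotProduct_mulVec_div_two {A : Matrix ι ι ℝ} (hA : A.PosDef) :
    ∫ x : ι → ℝ, exp (-(x ⬝ᵥ A *ᵥ x) / 2) = sqrt (2 * π) ^ Fintype.card ι / sqrt A.det := by
  obtain ⟨B, rfl⟩ : ∃ B : Matrix ι ι ℝ, A = Bᴴ * B := by
    open scoped MatrixOrder in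
    exact CStarAlgebra.nonneg_iff_eq_star_mul_self.mp hA.posSemidef.nonneg
  have hdet : (Bᴴ * B).det = B.det ^ 2 := by simp [det_mul, sq]
  have hB : B.det ≠ 0 := fun h => by simpa [hdet, h] using hA.det_pos
  have hquad : ∀ x, x ⬝ᵥ (Bᴴ * B) *ᵥ x = B *ᵥ x ⬝ᵥ B *ᵥ x := fun x => by
    rw [← mulVec_mulVec, dotProduct_mulVec, conjTranspose_eq_transpose_of_trivial,
      vecMul_transpose]
  calc ∫ x : ι → ℝ, exp (-(x ⬝ᵥ (Bᴴ * B) *ᵥ x) / 2)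
      = ∫ x : ι → ℝ, exp (-(toLin' B x ⬝ᵥ toLin' B x) / 2) := by
        simp_rw [hquad, toLin'_apply]
    _ = |B.det|⁻¹ * ∫ y : ι → ℝ, exp (-(y ⬝ᵥ y) / 2) := by
        rw [← integral_map (f := fun y : ι → ℝ => exp (-(y ⬝ᵥ y) / 2))
          (toLin' B).continuous_of_finiteDimensional.aemeasurable (by fun_prop),
          Real.map_matrix_volume_pi_eq_smul_volume_pi hB, integral_smul_measure,
          ENNReal.toReal_ofReal (by positivity), smul_eq_mul, abs_inv]
    _ = sqrt (2 * π) ^ Fintype.card ι / sqrt (Bᴴ * B).det := by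
        rw [integral_exp_neg_dotProduct_self_div_two, hdet, sqrt_sq_eq_abs, inv_mul_eq_div]

noncomputable def centeredGaussianDensity (S : Matrix ι ι ℝ) (x : ι → ℝ) : ℝ :=
  (2 * π) ^ (-(Fintype.card ι : ℝ) / 2) * S.det ^ (-(1 : ℝ) / 2) * exp (-(x ⬝ᵥ S⁻¹ *ᵥ x) / 2)

theorem centeredGaussianDensity_mul_div {S₀ S₁ S₂ : Matrix ι ι ℝ} (h₀ : 0 < S₀.det)
    (h₁ : 0 ≤ S₁.det) (h₂ : 0 ≤ S₂.det) (x : ι → ℝ) :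
    centeredGaussianDensity S₁ x * centeredGaussianDensity S₂ x / centeredGaussianDensity S₀ x =
      (2 * π) ^ (-(Fintype.card ι : ℝ) / 2) * (S₁.det * S₂.det / S₀.det) ^ (-(1 : ℝ) / 2) *
        exp (-(x ⬝ᵥ (S₁⁻¹ + S₂⁻¹ - S₀⁻¹) *ᵥ x) / 2) := by
  have hexp : exp (-(x ⬝ᵥ (S₁⁻¹ + S₂⁻¹ - S₀⁻¹) *ᵥ x) / 2) = exp (-(x ⬝ᵥ S₁⁻¹ *ᵥ x) / 2) *
      exp (-(x ⬝ᵥ S₂⁻¹ *ᵥ x) / 2) / exp (-(x ⬝ᵥ S₀⁻¹ *ᵥ x) / 2) := by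
    rw [← exp_add, ← exp_sub, sub_mulVec, add_mulVec, dotProduct_sub, dotProduct_add]
    ring_nf
  rw [hexp, div_rpow (mul_nonneg h₁ h₂) h₀.le, mul_rpow h₁ h₂, centeredGaussianDensity,
    centeredGaussianDensity, centeredGaussianDensity]
  have hc : 0 < (2 * π) ^ (-(Fintype.card ι : ℝ) / 2) := by positivity
  have hd₀ : 0 < S₀.det ^ (-(1 : ℝ) / 2) := by positivity
  field_simp

theorem integral_centeredGaussianDensity_mul_div {S₀ S₁ S₂ : Matrix ι ι ℝ} (h₀ : S₀.PosDef)
    (h₁ : S₁.PosDef) (h₂ : S₂.PosDef) (hM : (1 - S₀⁻¹ * (S₁ - S₀) * S₀⁻¹ * (S₂ - S₀)).PosDef) :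
    ∫ x, centeredGaussianDensity S₁ x * centeredGaussianDensity S₂ x /
        centeredGaussianDensity S₀ x =
      (1 - S₀⁻¹ * (S₁ - S₀) * S₀⁻¹ * (S₂ - S₀)).det ^ (-(1 : ℝ) / 2) := by
  have hA := posDef_inv_add_inv_sub_inv h₀ h₁ h₂ hM
  have hdetM : (1 - S₀⁻¹ * (S₁ - S₀) * S₀⁻¹ * (S₂ - S₀)).det
      = S₁.det * S₂.det / S₀.det * (S₁⁻¹ + S₂⁻¹ - S₀⁻¹).det := by
    rw [one_sub_inv_mul_sub_mul_inv_mul_sub h₁.det_pos.ne'.isUnit h₂.det_pos.ne'.isUnit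
      h₀.det_pos.ne'.isUnit, det_mul, det_mul, det_mul, det_nonsing_inv, Ring.inverse_eq_inv']
    ring
  simp_rw [centeredGaussianDensity_mul_div h₀.det_pos h₁.det_pos.le h₂.det_pos.le]
  rw [integral_const_mul, integral_exp_neg_dotProduct_mulVec_div_two hA, hdetM,
    mul_rpow (div_nonneg (mul_nonneg h₁.det_pos.le h₂.det_pos.le) h₀.det_pos.le) hA.det_pos.le]
  have hsqrt : ∀ {a : ℝ}, 0 ≤ a → a ^ (-(1 : ℝ) / 2) = (sqrt a)⁻¹ := fun ha => by
    rw [sqrt_eq_rpow, ← rpow_neg ha, neg_div]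
  have h2π : (2 * π) ^ (-(Fintype.card ι : ℝ) / 2) = (sqrt (2 * π) ^ Fintype.card ι)⁻¹ := by
    rw [sqrt_eq_rpow, ← rpow_natCast, ← rpow_mul (by positivity), ← rpow_neg (by positivity)]
    ring_nf
  rw [h2π, hsqrt hA.det_pos.le]
  field_simp

end Gaussian

/-- For centered Gaussian densities `g_i` with positive definite covariances `S_i`, if
`I - S₀⁻¹(S₁-S₀)S₀⁻¹(S₂-S₀)` is positive definite, then
`∫ g₁ g₂ / g₀ = det(I - S₀⁻¹(S₁-S₀)S₀⁻¹(S₂-S₀))^{-1/2}`. -/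
theorem stmt_7 {p : ℕ} (S0 S1 S2 : Matrix (Fin p) (Fin p) ℝ)
    (h0 : S0.PosDef) (h1 : S1.PosDef) (h2 : S2.PosDef)
    (hM : (1 - S0⁻¹ * (S1 - S0) * S0⁻¹ * (S2 - S0)).PosDef) :
    (∫ x : Fin p → ℝ,
        ((2 * Real.pi) ^ (-(p : ℝ) / 2) * S1.det ^ (-(1 : ℝ) / 2) *
            Real.exp (-(dotProduct x (S1⁻¹.mulVec x)) / 2)) *
          ((2 * Real.pi) ^ (-(p : ℝ) / 2) * S2.det ^ (-(1 : ℝ) / 2) *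
            Real.exp (-(dotProduct x (S2⁻¹.mulVec x)) / 2)) /
          ((2 * Real.pi) ^ (-(p : ℝ) / 2) * S0.det ^ (-(1 : ℝ) / 2) *
            Real.exp (-(dotProduct x (S0⁻¹.mulVec x)) / 2)))
      = (1 - S0⁻¹ * (S1 - S0) * S0⁻¹ * (S2 - S0)).det ^ (-(1 : ℝ) / 2) := by
  simpa only [centeredGaussianDensity, Fintype.card_fin] using
    integral_centeredGaussianDensity_mul_div h0 h1 h2 hM
end

section
/- Let a be a real number with 0 < 2(s-1)a² < 1 and let H be a p×p symmetric matrix whose only nonzero entries are s-1 entries equal to 1 in the first row (in positions 3 through p), the same s-1 positions of the second row, and their symmetric counterparts. Then the largest and smallest eigenvalues of (I + aH)^{-1} are (1 + sqrt(2(s-1)a²))/(1 - 2(s-1)a²) and (1 - sqrt(2(s-1)a²))/(1 - 2(s-1)a²), respectively, and all remaining eigenvalues equal 1. -/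
/-!
Write `a • H = u wᵀ + w uᵀ` with `u = a (e₀ + e₁)` and `w = 𝟙_S`, which are orthogonal. Such a
symmetric rank-two matrix acts on `span {u, w}` with eigenvalues `±‖u‖ ‖w‖` and kills every vector
orthogonal to both (here `e₀ - e₁`), so its spectrum is `{0} ∪ {ν | ν² = ‖u‖² ‖w‖²}`, and
`‖u‖² ‖w‖² = 2 (s - 1) a²`. Spectral mapping under `ν ↦ (1 + ν)⁻¹` then gives the claim, using
`(1 ± r)⁻¹ = (1 ∓ r) / (1 - r²)`.
-/

open Matrix Finset

namespace Matrix

variable {K n : Type*} [Field K] [Fintype n]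

theorem vecMulVec_add_vecMulVec_mulVec (u w v : n → K) :
    (vecMulVec u w + vecMulVec w u) *ᵥ v = (w ⬝ᵥ v) • u + (u ⬝ᵥ v) • w := by
  simp [add_mulVec, vecMulVec_mulVec]

section SymmetricRankTwo

variable {u w : n → K}

theorem sq_eq_of_vecMulVec_add_vecMulVec_mulVec_eq_smul (huw : u ⬝ᵥ w = 0) {v : n → K}
    (hv : v ≠ 0) {ν : K} (hν : ν ≠ 0)
    (h : (vecMulVec u w + vecMulVec w u) *ᵥ v = ν • v) :
    ν ^ 2 = (u ⬝ᵥ u) * (w ⬝ᵥ w) := by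
  rw [vecMulVec_add_vecMulVec_mulVec] at h
  have hu : ν * (u ⬝ᵥ v) = (w ⬝ᵥ v) * (u ⬝ᵥ u) := by
    simpa [dotProduct_add, dotProduct_smul, huw] using (congrArg (u ⬝ᵥ ·) h).symm
  have hw : ν * (w ⬝ᵥ v) = (u ⬝ᵥ v) * (w ⬝ᵥ w) := by
    simpa [dotProduct_add, dotProduct_smul, dotProduct_comm w u, huw] using
      (congrArg (w ⬝ᵥ ·) h).symm
  have huv : u ⬝ᵥ v ≠ 0 := by
    intro huv
    have hwv : w ⬝ᵥ v = 0 := by simpa [huv, hν] using hw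
    simp [huv, hwv, hν, hv, eq_comm] at h
  apply mul_right_cancel₀ huv
  linear_combination ν * hu + (u ⬝ᵥ u) * hw

theorem vecMulVec_add_vecMulVec_mulVec_eigenvector (huw : u ⬝ᵥ w = 0) {ν : K}
    (hν : ν ^ 2 = (u ⬝ᵥ u) * (w ⬝ᵥ w)) :
    (vecMulVec u w + vecMulVec w u) *ᵥ (ν • u + (u ⬝ᵥ u) • w) =
      ν • (ν • u + (u ⬝ᵥ u) • w) := by
  simp only [vecMulVec_add_vecMulVec_mulVec, dotProduct_add, dotProduct_smul, smul_eq_mul,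
    dotProduct_comm w u, huw, smul_add, smul_smul]
  rw [← hν]
  module

end SymmetricRankTwo

variable [DecidableEq n]

theorem mem_spectrum_iff_exists_mulVec_eq_smul {A : Matrix n n K} {μ : K} :
    μ ∈ spectrum K A ↔ ∃ v ≠ 0, A *ᵥ v = μ • v := by
  rw [← spectrum_toLin', ← Module.End.hasEigenvalue_iff_mem_spectrum]
  constructor
  · intro h
    obtain ⟨v, hv⟩ := h.exists_hasEigenvector
    exact ⟨v, hv.2, by simpa using hv.apply_eq_smul⟩
  · rintro ⟨v, hv0, hv⟩
    exact Module.End.hasEigenvalue_of_hasEigenvector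
      ⟨Module.End.mem_eigenspace_iff.mpr (by simpa using hv), hv0⟩

theorem spectrum_vecMulVec_add_vecMulVec {u w : n → K} (huw : u ⬝ᵥ w = 0) (huu : u ⬝ᵥ u ≠ 0)
    (hker : ∃ v ≠ 0, u ⬝ᵥ v = 0 ∧ w ⬝ᵥ v = 0) :
    spectrum K (vecMulVec u w + vecMulVec w u) =
      {ν | ν = 0 ∨ ν ^ 2 = (u ⬝ᵥ u) * (w ⬝ᵥ w)} := by
  ext ν
  rw [mem_spectrum_iff_exists_mulVec_eq_smul, Set.mem_ofPred_eq, or_iff_not_imp_left]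
  constructor
  · rintro ⟨v, hv, h⟩ hν
    exact sq_eq_of_vecMulVec_add_vecMulVec_mulVec_eq_smul huw hv hν h
  · intro h
    by_cases hν : ν = 0
    · obtain ⟨v, hv, huv, hwv⟩ := hker
      exact ⟨v, hv, by simp [vecMulVec_add_vecMulVec_mulVec, huv, hwv, hν]⟩
    · refine ⟨ν • u + (u ⬝ᵥ u) • w, fun h0 ↦ ?_,
        vecMulVec_add_vecMulVec_mulVec_eigenvector huw (h hν)⟩
      have := congrArg (u ⬝ᵥ ·) h0
      simp [dotProduct_add, dotProduct_smul, huw, hν, huu] at this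

theorem mem_spectrum_inv_iff {A : Matrix n n K} (hA : IsUnit A) {μ : K} :
    μ ∈ spectrum K A⁻¹ ↔ μ⁻¹ ∈ spectrum K A := by
  obtain ⟨U, rfl⟩ := hA
  rw [← coe_units_inv, spectrum.inv₀_mem_iff]

theorem mem_spectrum_one_add_iff {A : Matrix n n K} {μ : K} :
    μ ∈ spectrum K (1 + A) ↔ μ - 1 ∈ spectrum K A := by
  have h := spectrum.add_mem_add_iff (a := A) (r := μ - 1) (s := (1 : K))
  rwa [sub_add_cancel, map_one] at h

theorem ite_mem_dotProduct (T : Finset n) (c : K) (v : n → K) :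
    (fun i ↦ if i ∈ T then c else 0) ⬝ᵥ v = c * ∑ i ∈ T, v i := by
  simp [dotProduct, ite_mul, Finset.sum_ite_mem, Finset.mul_sum]

end Matrix

theorem smul_eq_vecMulVec_add_vecMulVec {p : ℕ} [NeZero p] {S : Finset (Fin p)}
    (hS0 : (0 : Fin p) ∉ S) (hS1 : (1 : Fin p) ∉ S) {H : Matrix (Fin p) (Fin p) ℝ}
    (hH : ∀ i j, H i j =
      if ((i = 0 ∨ i = 1) ∧ j ∈ S) ∨ ((j = 0 ∨ j = 1) ∧ i ∈ S) then 1 else 0) (a : ℝ) :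
    a • H = vecMulVec (fun i ↦ if i ∈ ({0, 1} : Finset (Fin p)) then a else 0)
      (fun j ↦ if j ∈ S then 1 else 0) +
      vecMulVec (fun j ↦ if j ∈ S then 1 else 0)
        (fun i ↦ if i ∈ ({0, 1} : Finset (Fin p)) then a else 0) := by
  have hdisj : ∀ k ∈ S, ¬(k = 0 ∨ k = 1) := by
    rintro k hk (rfl | rfl) <;> contradiction
  ext i j
  simp only [Matrix.smul_apply, hH, Matrix.add_apply, vecMulVec_apply, mem_insert, mem_singleton]
  split_ifs <;> simp_all

theorem spectrum_smul_eq {p : ℕ} [NeZero p] {S : Finset (Fin p)} (hS : S.Nonempty)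
    (hS0 : (0 : Fin p) ∉ S) (hS1 : (1 : Fin p) ∉ S) {H : Matrix (Fin p) (Fin p) ℝ}
    (hH : ∀ i j, H i j =
      if ((i = 0 ∨ i = 1) ∧ j ∈ S) ∨ ((j = 0 ∨ j = 1) ∧ i ∈ S) then 1 else 0)
    {a : ℝ} (ha : a ≠ 0) :
    spectrum ℝ (a • H) = {ν | ν = 0 ∨ ν ^ 2 = 2 * #S * a ^ 2} := by
  obtain ⟨j, hj⟩ := hS
  have h01 : (0 : Fin p) ≠ 1 := fun h ↦
    ne_of_mem_of_not_mem hj hS0 (by simpa using congrArg (j * ·) h.symm)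
  rw [smul_eq_vecMulVec_add_vecMulVec hS0 hS1 hH, spectrum_vecMulVec_add_vecMulVec]
  all_goals simp only [ite_mem_dotProduct, sum_pair h01]
  · congr! 4
    simp
    ring
  · simp [hS0, hS1]
  · simp [ha]
  · refine ⟨Pi.single 0 1 - Pi.single 1 1, fun h ↦ ?_, by simp [h01, h01.symm], ?_⟩
    · simpa [h01] using congrFun h 0
    · refine (one_mul _).trans (sum_eq_zero fun i hi ↦ ?_)
      simp [ne_of_mem_of_not_mem hi hS0, ne_of_mem_of_not_mem hi hS1]

theorem inv_sub_one_eq_zero_or_sq_eq_iff {t μ : ℝ} (ht0 : 0 ≤ t) (ht1 : t < 1) :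
    (μ⁻¹ - 1 = 0 ∨ (μ⁻¹ - 1) ^ 2 = t) ↔
      μ = (1 + √t) / (1 - t) ∨ μ = (1 - √t) / (1 - t) ∨ μ = 1 := by
  obtain ⟨r, hr0, rfl⟩ : ∃ r, 0 ≤ r ∧ t = r ^ 2 := ⟨√t, Real.sqrt_nonneg t, (Real.sq_sqrt ht0).symm⟩
  have hr1 : r < 1 := by nlinarith
  have h1 : (1 + r) / (1 - r ^ 2) = (1 - r)⁻¹ := by
    field_simp [show 1 - r ≠ 0 by linarith, show 1 - r ^ 2 ≠ 0 by nlinarith]; ring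
  have h2 : (1 - r) / (1 - r ^ 2) = (1 + r)⁻¹ := by
    field_simp [show 1 + r ≠ 0 by linarith, show 1 - r ^ 2 ≠ 0 by nlinarith]; ring
  rw [Real.sqrt_sq hr0, h1, h2, ← inv_eq_iff_eq_inv, ← inv_eq_iff_eq_inv, ← inv_eq_one,
    sq_eq_sq_iff_eq_or_eq_neg]
  grind

theorem stmt_10_general {p : ℕ} [NeZero p] (s : ℕ) (a : ℝ)
    (S : Finset (Fin p)) (hS0 : (0 : Fin p) ∉ S) (hS1 : (1 : Fin p) ∉ S)
    (hScard : S.card = s - 1)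
    (H : Matrix (Fin p) (Fin p) ℝ)
    (hH : ∀ i j, H i j =
      if ((i = 0 ∨ i = 1) ∧ j ∈ S) ∨ ((j = 0 ∨ j = 1) ∧ i ∈ S) then 1 else 0)
    (hlow : 0 < 2 * ((s : ℝ) - 1) * a ^ 2) (hup : 2 * ((s : ℝ) - 1) * a ^ 2 < 1) :
    spectrum ℝ ((1 + a • H)⁻¹) =
      {(1 + Real.sqrt (2 * ((s : ℝ) - 1) * a ^ 2)) / (1 - 2 * ((s : ℝ) - 1) * a ^ 2),
       (1 - Real.sqrt (2 * ((s : ℝ) - 1) * a ^ 2)) / (1 - 2 * ((s : ℝ) - 1) * a ^ 2),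
       1} := by
  have hs : 2 ≤ s := by
    by_contra! hs
    have : (s : ℝ) ≤ 1 := by exact_mod_cast Nat.lt_succ_iff.mp hs
    nlinarith [sq_nonneg a]
  have hcard : (#S : ℝ) = s - 1 := by rw [hScard, Nat.cast_sub (by omega), Nat.cast_one]
  have hspec : spectrum ℝ (a • H) = {ν | ν = 0 ∨ ν ^ 2 = 2 * ((s : ℝ) - 1) * a ^ 2} := by
    rw [spectrum_smul_eq (card_pos.mp (by omega)) hS0 hS1 hH (by rintro rfl; simp at hlow),
      hcard]
  have hunit : IsUnit (1 + a • H) := by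
    rw [← spectrum.zero_notMem_iff ℝ, mem_spectrum_one_add_iff, hspec]
    norm_num
    linarith
  ext μ
  rw [mem_spectrum_inv_iff hunit, mem_spectrum_one_add_iff, hspec]
  exact inv_sub_one_eq_zero_or_sq_eq_iff hlow.le hup

/-- Eigenvalues of `(I + aH)⁻¹` where `H` is the symmetric 0/1 matrix supported on the first two
rows/columns with `s-1` ones each (in common positions among indices `≥ 2`): the spectrum consists
of `(1 ± √(2(s-1)a²))/(1 - 2(s-1)a²)` together with `1`. -/
theorem stmt_10 {p : ℕ} [NeZero p] (hp : 3 ≤ p) (s : ℕ) (a : ℝ)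
    (S : Finset (Fin p)) (hS0 : (0 : Fin p) ∉ S) (hS1 : (1 : Fin p) ∉ S)
    (hScard : S.card = s - 1)
    (H : Matrix (Fin p) (Fin p) ℝ)
    (hH : ∀ i j, H i j =
      if ((i = 0 ∨ i = 1) ∧ j ∈ S) ∨ ((j = 0 ∨ j = 1) ∧ i ∈ S) then 1 else 0)
    (hpd : (1 + a • H).PosDef)
    (hlow : 0 < 2 * ((s : ℝ) - 1) * a ^ 2) (hup : 2 * ((s : ℝ) - 1) * a ^ 2 < 1) :
    spectrum ℝ ((1 + a • H)⁻¹) =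
      {(1 + Real.sqrt (2 * ((s : ℝ) - 1) * a ^ 2)) / (1 - 2 * ((s : ℝ) - 1) * a ^ 2),
       (1 - Real.sqrt (2 * ((s : ℝ) - 1) * a ^ 2)) / (1 - 2 * ((s : ℝ) - 1) * a ^ 2),
       1} :=
  stmt_10_general s a S hS0 hS1 hScard H hH hlow hup
end

section
/- Let T ⊂ [p], ξ ≥ 1, and define Ψ(ξ,T) and the group s-sparse set 𝕂(s) = {u ∈ ℝ^{pk} : at most s groups u_{(l)} are nonzero}, where vectors in ℝ^{pk} are partitioned into p groups of size k. If |T| ≤ s, then Ψ(ξ,T) ∩ B_2(1) ⊆ cl(conv(𝕂(s) ∩ B_2(2+ξ))), where B_2(r) is the Euclidean ball of radius r and cl(conv(·)) denotes the closed convex hull. -/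
/-!
Sort the groups of `u` by decreasing norm and cut them into consecutive blocks of `s` groups;
let `w i` be the restriction of `u` to block `i`, so that `u = ∑ i, w i` with every `w i`
group `s`-sparse. Each group of block `i + 1` is no larger than any group of the full block `i`,
so `√s ‖w (i+1)‖ ≤ ∑_{j ∈ block i} ‖u_j‖`; summing, `∑ i, ‖w i‖ ≤ ‖u‖ + ‖u‖_{2,1} / √s`.
On `Ψ(ξ,T) ∩ B₂(1)` Cauchy–Schwarz gives `‖u‖_{2,1} ≤ (1 + ξ) ‖u_T‖_{2,1} ≤ (1 + ξ) √s`, hence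
`∑ i, ‖w i‖ ≤ 2 + ξ`. Rescaling every `w i` to norm `∑ i, ‖w i‖` then exhibits `u` as a
convex combination of group `s`-sparse vectors in `B₂(2 + ξ)`.
-/

open Finset

section Blocks

variable {ι α : Type*} [Fintype ι] [LinearOrder α]

theorem exists_equiv_fin_antitone (f : ι → α) :
    ∃ e : ι ≃ Fin (Fintype.card ι), Antitone (f ∘ e.symm) := by
  let e₀ := Fintype.equivFin ι
  exact ⟨e₀.trans (Tuple.sort (OrderDual.toDual ∘ f ∘ e₀.symm)).symm,
    Tuple.monotone_sort (OrderDual.toDual ∘ f ∘ e₀.symm)⟩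

theorem card_filter_fin_div_eq (n s i : ℕ) (hs : 0 < s) :
    #{r : Fin n | (r : ℕ) / s = i} = min ((i + 1) * s) n - i * s := by
  rw [← Nat.card_Ico, ← card_map Fin.valEmbedding]
  congr 1
  ext m
  simp only [mem_map, mem_filter, mem_univ, true_and, Fin.valEmbedding_apply, mem_Ico,
    Nat.div_eq_iff hs, add_one_mul]
  constructor
  · rintro ⟨r, hr, rfl⟩
    omega
  · intro hm
    exact ⟨⟨m, by omega⟩, by simp only; omega, rfl⟩

/-- `b` cuts the indices, sorted by decreasing `f`, into consecutive blocks
`b ⁻¹' {0}, b ⁻¹' {1}, …` of `s` indices each, the last nonempty one possibly smaller. -/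
structure IsSortedBlocking (f : ι → α) (s : ℕ) (b : ι → ℕ) : Prop where
  lt_card : ∀ j, b j < Fintype.card ι
  card_le : ∀ i, #{j | b j = i} ≤ s
  le_card_of_succ : ∀ i, (∃ j, b j = i + 1) → s ≤ #{j | b j = i}
  antitone : ∀ j j', b j < b j' → f j' ≤ f j

theorem exists_isSortedBlocking (f : ι → α) {s : ℕ} (hs : 0 < s) :
    ∃ b, IsSortedBlocking f s b := by
  obtain ⟨e, he⟩ := exists_equiv_fin_antitone f
  have hcard : ∀ i, #{j | (e j : ℕ) / s = i} = min ((i + 1) * s) (Fintype.card ι) - i * s :=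
    fun i => (card_equiv e (by simp)).trans (card_filter_fin_div_eq _ s i hs)
  refine ⟨fun j => (e j : ℕ) / s, ⟨fun j => ?_, fun i => ?_, ?_, fun j j' h => ?_⟩⟩
  · exact (Nat.div_le_self _ _).trans_lt (e j).isLt
  · rw [hcard, add_one_mul]
    omega
  · rintro i ⟨j, hj⟩
    have : i * s + s ≤ e j := by rw [← add_one_mul, ← hj]; exact Nat.div_mul_le_self _ _
    have := (e j).isLt
    rw [hcard, add_one_mul]
    omega
  · have hlt : e j < e j' := Fin.lt_def.2 (Nat.lt_of_div_lt_div h)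
    simpa using he hlt.le

end Blocks

theorem sqrt_mul_sqrt_sum_sq_le_sum {ι : Type*} {A B : Finset ι} {f : ι → ℝ} {s : ℕ}
    (hf : ∀ j, 0 ≤ f j) (hA : #A ≤ s) (hB : A.Nonempty → s ≤ #B)
    (hAB : ∀ a ∈ A, ∀ b ∈ B, f a ≤ f b) :
    √s * √(∑ j ∈ A, f j ^ 2) ≤ ∑ j ∈ B, f j := by
  rcases A.eq_empty_or_nonempty with rfl | hAne
  · simpa using sum_nonneg fun j _ => hf j
  obtain ⟨a, ha, hmax⟩ := exists_max_image A f hAne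
  have hsum_sq : ∑ j ∈ A, f j ^ 2 ≤ s * f a ^ 2 := calc
    ∑ j ∈ A, f j ^ 2 ≤ #A • f a ^ 2 :=
      sum_le_card_nsmul _ _ _ fun j hj => pow_le_pow_left₀ (hf j) (hmax j hj) 2
    _ ≤ s * f a ^ 2 := by rw [nsmul_eq_mul]; gcongr
  have hsum : s * f a ≤ ∑ j ∈ B, f j := calc
    s * f a ≤ #B • f a := by rw [nsmul_eq_mul]; gcongr; exacts [hf a, hB hAne]
    _ ≤ ∑ j ∈ B, f j := card_nsmul_le_sum _ _ _ (hAB a ha)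
  rw [← Real.sqrt_mul (Nat.cast_nonneg s), Real.sqrt_le_iff]
  refine ⟨(mul_nonneg (Nat.cast_nonneg s) (hf a)).trans hsum, ?_⟩
  calc (s : ℝ) * ∑ j ∈ A, f j ^ 2 ≤ s * (s * f a ^ 2) := by gcongr
    _ = (s * f a) ^ 2 := by ring
    _ ≤ (∑ j ∈ B, f j) ^ 2 := by gcongr; exact mul_nonneg (Nat.cast_nonneg s) (hf a)

theorem sum_mem_convexHull_inter_closedBall {E ι : Type*} [NormedAddCommGroup E] [NormedSpace ℝ E]
    {S : Set E} (hS₀ : (0 : E) ∈ S) (hS : ∀ c : ℝ, ∀ x ∈ S, c • x ∈ S) {t : Finset ι} {w : ι → E}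
    (hw : ∀ i ∈ t, w i ∈ S) {R : ℝ} (hR : ∑ i ∈ t, ‖w i‖ ≤ R) :
    ∑ i ∈ t, w i ∈ convexHull ℝ (S ∩ Metric.closedBall 0 R) := by
  set M := ∑ i ∈ t, ‖w i‖
  have hR₀ : 0 ≤ R := (sum_nonneg fun i _ => norm_nonneg (w i)).trans hR
  rcases (sum_nonneg fun i _ => norm_nonneg (w i) : 0 ≤ M).eq_or_lt with hM | hM
  · have hw₀ : ∀ i ∈ t, w i = 0 := fun i hi =>
      norm_eq_zero.1 ((sum_eq_zero_iff_of_nonneg fun i _ => norm_nonneg (w i)).1 hM.symm i hi)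
    rw [sum_eq_zero hw₀]
    exact subset_convexHull ℝ _ ⟨hS₀, by simpa using hR₀⟩
  -- each `w i` is the point `(M / ‖w i‖) • w i` of norm `M`, weighted by `‖w i‖ / M`
  have hrescale : ∀ i, ‖w i‖ • (M / ‖w i‖) • w i = M • w i := by
    intro i
    rcases eq_or_ne (w i) 0 with h | h
    · simp [h]
    · rw [smul_smul, mul_div_cancel₀ _ (norm_ne_zero_iff.2 h)]
  have hcm : t.centerMass (fun i => ‖w i‖) (fun i => (M / ‖w i‖) • w i) = ∑ i ∈ t, w i := by
    simp only [centerMass, hrescale, ← smul_sum]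
    exact inv_smul_smul₀ hM.ne' _
  rw [← hcm]
  refine centerMass_mem_convexHull t (fun i _ => norm_nonneg _) hM fun i hi =>
    ⟨hS _ _ (hw i hi), ?_⟩
  rw [mem_closedBall_zero_iff, norm_smul, Real.norm_of_nonneg (by positivity)]
  rcases eq_or_ne (w i) 0 with h | h
  · simpa [h] using hR₀
  · rwa [div_mul_cancel₀ _ (norm_ne_zero_iff.2 h)]

namespace PiLp

variable {ι : Type*} {β : ι → Type*} [∀ i, NormedAddCommGroup (β i)]

def groupSparse (β : ι → Type*) [∀ i, NormedAddCommGroup (β i)] (s : ℕ) : Set (PiLp 2 β) :=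
  {u | ({l | u l ≠ 0} : Set ι).ncard ≤ s}

theorem zero_mem_groupSparse (s : ℕ) : (0 : PiLp 2 β) ∈ groupSparse β s := by
  simp [groupSparse]

theorem smul_mem_groupSparse [Finite ι] [∀ i, Module ℝ (β i)] {s : ℕ} (c : ℝ) {u : PiLp 2 β}
    (hu : u ∈ groupSparse β s) : c • u ∈ groupSparse β s := by
  refine le_trans (Set.ncard_le_ncard (fun l hl => ?_) (Set.toFinite _)) hu
  simp only [Set.mem_ofPred_eq, smul_apply] at hl ⊢
  exact right_ne_zero_of_smul hl

variable [DecidableEq ι]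

def restrict (u : PiLp 2 β) (A : Finset ι) : PiLp 2 β :=
  WithLp.toLp 2 fun j => if j ∈ A then u j else 0

@[simp]
theorem restrict_apply (u : PiLp 2 β) (A : Finset ι) (j : ι) :
    u.restrict A j = if j ∈ A then u j else 0 := rfl

theorem restrict_mem_groupSparse (u : PiLp 2 β) {A : Finset ι} {s : ℕ} (hA : #A ≤ s) :
    u.restrict A ∈ groupSparse β s := by
  refine le_trans (Set.ncard_le_ncard (t := A) (fun l hl => ?_) A.finite_toSet) ?_
  · exact mem_coe.2 (by simpa using hl : l ∈ A ∧ _).1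
  · rwa [Set.ncard_coe_finset]

variable [Fintype ι]

theorem norm_restrict (u : PiLp 2 β) (A : Finset ι) :
    ‖u.restrict A‖ = √(∑ j ∈ A, ‖u j‖ ^ 2) := by
  rw [← Real.sqrt_sq (norm_nonneg _), norm_sq_eq_of_L2]
  simp [apply_ite (‖·‖ ^ 2), sum_ite_mem]

theorem norm_restrict_le (u : PiLp 2 β) (A : Finset ι) : ‖u.restrict A‖ ≤ ‖u‖ := by
  rw [norm_restrict, ← Real.sqrt_sq (norm_nonneg u), norm_sq_eq_of_L2]
  exact Real.sqrt_le_sqrt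
    (sum_le_sum_of_subset_of_nonneg (subset_univ A) fun j _ _ => by positivity)

theorem sum_norm_le_sqrt_card_mul_norm (u : PiLp 2 β) (T : Finset ι) :
    ∑ j ∈ T, ‖u j‖ ≤ √(#T : ℝ) * ‖u‖ := by
  calc ∑ j ∈ T, ‖u j‖ ≤ √(#T * ∑ j ∈ T, ‖u j‖ ^ 2) :=
        Real.le_sqrt_of_sq_le sq_sum_le_card_mul_sum_sq
    _ = √(#T : ℝ) * ‖u.restrict T‖ := by rw [Real.sqrt_mul (Nat.cast_nonneg _), norm_restrict]
    _ ≤ √(#T : ℝ) * ‖u‖ := by gcongr; exact norm_restrict_le u T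

theorem sum_restrict_fiberwise {κ : Type*} [DecidableEq κ] (u : PiLp 2 β) {t : Finset κ}
    {g : ι → κ} (hg : ∀ j, g j ∈ t) : ∑ i ∈ t, u.restrict {j | g j = i} = u := by
  ext j
  simp [WithLp.ofLp_sum, Finset.sum_apply, hg]

theorem _root_.IsSortedBlocking.sqrt_mul_sum_norm_restrict_succ_le {u : PiLp 2 β} {s : ℕ}
    {b : ι → ℕ} (hb : IsSortedBlocking (fun j => ‖u j‖) s b) :
    √(s : ℝ) * ∑ i ∈ range (Fintype.card ι), ‖u.restrict {j | b j = i + 1}‖ ≤ ∑ j, ‖u j‖ := by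
  rw [mul_sum]
  calc ∑ i ∈ range (Fintype.card ι), √(s : ℝ) * ‖u.restrict {j | b j = i + 1}‖
      ≤ ∑ i ∈ range (Fintype.card ι), ∑ j with b j = i, ‖u j‖ := sum_le_sum fun i _ => by
        rw [norm_restrict]
        refine sqrt_mul_sqrt_sum_sq_le_sum (fun j => norm_nonneg _) (hb.card_le _)
          (fun ⟨j, hj⟩ => hb.le_card_of_succ i ⟨j, (mem_filter.1 hj).2⟩) fun a ha a' ha' => ?_
        simp only [mem_filter, mem_univ, true_and] at ha ha'
        exact hb.antitone _ _ (by omega)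
    _ = ∑ j, ‖u j‖ := sum_fiberwise_of_maps_to (fun j _ => mem_range.2 (hb.lt_card j)) _

theorem mem_convexHull_groupSparse_of_sum_norm_le [∀ i, NormedSpace ℝ (β i)] {u : PiLp 2 β}
    {s : ℕ} {C : ℝ} (hC : 0 ≤ C) (h : ∑ j, ‖u j‖ ≤ C * √(s : ℝ)) :
    u ∈ convexHull ℝ (groupSparse β s ∩ Metric.closedBall 0 (‖u‖ + C)) := by
  rcases Nat.eq_zero_or_pos s with rfl | hs
  · have hu : u = 0 := by
      refine PiLp.ext fun j => norm_eq_zero.1 ?_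
      exact (sum_eq_zero_iff_of_nonneg fun j _ => norm_nonneg (u j)).1
        (le_antisymm (by simpa using h) (sum_nonneg fun j _ => norm_nonneg _)) j (mem_univ j)
    subst hu
    exact subset_convexHull ℝ _ ⟨zero_mem_groupSparse 0, by simpa using hC⟩
  obtain ⟨b, hb⟩ := exists_isSortedBlocking (fun j => ‖u j‖) hs
  have hcover : ∀ j, b j ∈ range (Fintype.card ι + 1) := fun j =>
    mem_range.2 ((hb.lt_card j).trans (Nat.lt_succ_self _))
  have htail : ∑ i ∈ range (Fintype.card ι), ‖u.restrict {j | b j = i + 1}‖ ≤ C :=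
    le_of_mul_le_mul_left (by linarith [hb.sqrt_mul_sum_norm_restrict_succ_le])
      (Real.sqrt_pos.2 (Nat.cast_pos.2 hs))
  have hmem := sum_mem_convexHull_inter_closedBall (S := groupSparse β s) (R := ‖u‖ + C)
    (t := range (Fintype.card ι + 1)) (w := fun i => u.restrict {j | b j = i})
    (zero_mem_groupSparse s) (fun c _ => smul_mem_groupSparse c)
    (fun i _ => u.restrict_mem_groupSparse (hb.card_le i)) ?_
  · rwa [u.sum_restrict_fiberwise hcover] at hmem
  rw [sum_range_succ']
  linarith [u.norm_restrict_le {j | b j = 0}]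

end PiLp

/-- The cone `Ψ(ξ,T)` intersected with the unit Euclidean ball is contained in the closed
convex hull of the group `s`-sparse vectors of norm at most `2 + ξ`. -/
theorem stmt_15 {p k : ℕ} (s : ℕ) (T : Finset (Fin p)) (hT : T.card ≤ s)
    (ξ : ℝ) (hξ : 1 ≤ ξ) :
    {u : PiLp 2 (fun _ : Fin p => EuclideanSpace ℝ (Fin k)) |
        (∑ j ∈ Tᶜ, ‖u j‖) ≤ ξ * ∑ j ∈ T, ‖u j‖} ∩ Metric.closedBall 0 1
      ⊆ closure (convexHull ℝ
          ({u : PiLp 2 (fun _ : Fin p => EuclideanSpace ℝ (Fin k)) |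
              ({l | u l ≠ 0} : Set (Fin p)).ncard ≤ s} ∩ Metric.closedBall 0 (2 + ξ))) := by
  rintro u ⟨hΨ, hu⟩
  rw [Set.mem_ofPred_eq] at hΨ
  rw [mem_closedBall_zero_iff] at hu
  have hℓ₁ : ∑ j, ‖u j‖ ≤ (1 + ξ) * √(s : ℝ) := calc
    ∑ j, ‖u j‖ = ∑ j ∈ T, ‖u j‖ + ∑ j ∈ Tᶜ, ‖u j‖ := (sum_add_sum_compl T _).symm
    _ ≤ (1 + ξ) * ∑ j ∈ T, ‖u j‖ := by linarith
    _ ≤ (1 + ξ) * (√(#T : ℝ) * ‖u‖) :=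
      mul_le_mul_of_nonneg_left (PiLp.sum_norm_le_sqrt_card_mul_norm u T) (by linarith)
    _ ≤ (1 + ξ) * √(s : ℝ) := mul_le_mul_of_nonneg_left
      ((mul_le_of_le_one_right (Real.sqrt_nonneg _) hu).trans
        (Real.sqrt_le_sqrt (Nat.cast_le.2 hT))) (by linarith)
  refine subset_closure (convexHull_mono ?_ (PiLp.mem_convexHull_groupSparse_of_sum_norm_le
    (by linarith) hℓ₁))
  exact Set.inter_subset_inter_right _ (Metric.closedBall_subset_closedBall (by linarith))
end
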